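/- arXiv:2105.03074 — 2 statements merged into one kernel-verified Lean document; each statement's English description precedes it below -/
import Mathlib

section
/- Let p be a prime, w ≥ 1, μ > 0 with 2^μ an integer, and c_μ = 2^μ·sin(π/2^μ)/(p·sin(π/p)). For any sets A₁,…,A_{2^μ} ⊆ F_{p^w} with ∑_{i=1}^{2^μ}|A_i| = p^w, we have ∑_{i=1}^{2^μ} max_{α≠0} |1̂_{A_i}(α)| ≤ c_μ. -/
open Finset Classical

/-- ω_p = e^{2πi/p}. -/
noncomputable def omg (p : ℕ) : ℂ := Complex.exp (2 * Real.pi * Complex.I / p)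

/-- ω_p^{Tr(x)}, where Tr is the field trace from `K` to `ZMod p`. -/
noncomputable def chr (p : ℕ) [Fact p.Prime] (K : Type*) [Field K] [Algebra (ZMod p) K]
    (x : K) : ℂ := omg p ^ (Algebra.trace (ZMod p) K x).val

/-- Fourier coefficient of the indicator of `A ⊆ K` at `α`. -/
noncomputable def ihat (p : ℕ) [Fact p.Prime] (K : Type*) [Field K] [Fintype K]
    [Algebra (ZMod p) K] (A : Finset K) (α : K) : ℂ :=
  (1 / (Fintype.card K : ℂ)) * ∑ x : K, (if x ∈ A then 1 else 0) * chr p K (α * x)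

open Real MeasureTheory Function

/-!
For `α ≠ 0` the map `x ↦ Tr(αx)` is onto `𝔽_p`, so all its fibres have `M = |K|/p` elements and
`1̂_A(α) = |K|⁻¹ ∑_j c_j ω_p^j` with `c_j = |A ∩ Tr(α·)⁻¹(j)| ∈ [0, M]` and `∑_j c_j = |A|`.
Such a sum has modulus at most `M sin(π|A|/|K|) / sin(π/p)`. After rotating it onto the positive
real axis its modulus is `∑_j c_j cos φ_j`; spread each weight `c_j` uniformly over an arc of
length `2π/p` centred at `φ_j`. Since `∫ cos` over that arc is `2 sin(π/p) cos φ_j`, the sum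
becomes the integral of `cos` against a density bounded by `M` with total mass `2π|A|/p`, and
this integral is largest when the mass sits on a single arc centred at `0` (bathtub principle).
The bathtub argument needs that arc to be at most half the circle; for larger `A` pass to the
complementary weights `M - c_j`, using `∑_j ω_p^j = 0`. Finally `sin` is concave on `[0, π]`,
so Jensen's inequality bounds `∑_i sin(π|A_i|/|K|)` by `2^μ sin(π/2^μ)` when `∑_i |A_i| = |K|`.
-/

theorem integral_indicator_Ico_cos_sub {l r : ℝ} (hlr : l ≤ r) (a : ℝ) :
    ∫ u, (Set.Ico l r).indicator (fun u => cos u - cos a) u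
      = sin r - sin l - (r - l) * cos a := by
  rw [integral_indicator measurableSet_Ico, integral_Ico_eq_integral_Ioc,
    ← intervalIntegral.integral_of_le hlr,
    intervalIntegral.integral_sub (continuous_cos.intervalIntegrable _ _) intervalIntegrable_const,
    integral_cos, intervalIntegral.integral_const, smul_eq_mul]

theorem integrable_indicator_Ico_cos_sub (l r a : ℝ) :
    Integrable ((Set.Ico l r).indicator fun u => cos u - cos a) :=
  ((continuous_cos.sub continuous_const).integrableOn_Icc.mono_set
    Set.Ico_subset_Icc_self).integrable_indicator measurableSet_Ico

theorem sum_mul_indicator_le {ι : Type*} [Fintype ι] {S : ι → Set ℝ}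
    (hS : Pairwise (Disjoint on S)) {c : ι → ℝ} {M : ℝ} (hc : ∀ j, c j ∈ Set.Icc 0 M)
    (hM : 0 ≤ M) (u : ℝ) :
    ∑ j, c j * (S j).indicator 1 u ≤ M := by
  by_cases hu : ∃ j, u ∈ S j
  · obtain ⟨j, hj⟩ := hu
    rw [sum_eq_single j (fun k _ hkj => ?_) (by simp)]
    · simpa [hj] using (hc j).2
    · rw [Set.indicator_of_notMem fun hk => (hS hkj).ne_of_mem hk hj rfl, mul_zero]
  · push Not at hu
    simpa [hu] using hM

theorem cos_le_cos_of_le_abs {a u : ℝ} (ha : 0 ≤ a) (h₁ : a ≤ |u|) (h₂ : |u| ≤ 2 * π - a) :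
    cos u ≤ cos a := by
  rw [← cos_abs u]
  rcases le_total |u| π with h | h
  · exact cos_le_cos_of_nonneg_of_le_pi ha h h₁
  · rw [← cos_two_pi_sub]
    exact cos_le_cos_of_nonneg_of_le_pi ha (by linarith) (by linarith)

section Bathtub

variable {ι : Type*} [Fintype ι] {c φ : ι → ℝ} {M s a : ℝ}

/-- On `[-a, a)` the weights sum to at most `M` and `cos ≥ cos a`; off it, every arc lies inside
`(-π - s, π + s)`, where `a + s ≤ π` forces `cos ≤ cos a`. -/
theorem sum_mul_indicator_Ico_cos_sub_le (hc : ∀ j, c j ∈ Set.Icc 0 M) (hM : 0 ≤ M)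
    (hφ : ∀ j, φ j ∈ Set.Ioc (-π) π)
    (hdisj : Pairwise (Disjoint on fun j => Set.Ico (φ j - s) (φ j + s)))
    (hs : 0 ≤ s) (ha : 0 ≤ a) (has : a + s ≤ π) (u : ℝ) :
    ∑ j, c j * (Set.Ico (φ j - s) (φ j + s)).indicator (fun u => cos u - cos a) u
      ≤ M * (Set.Ico (-a) a).indicator (fun u => cos u - cos a) u := by
  by_cases hu : u ∈ Set.Ico (-a) a
  · have hcos : cos a ≤ cos u := by
      rw [← cos_abs u]
      exact cos_le_cos_of_nonneg_of_le_pi (abs_nonneg u) (by linarith) (abs_le.mpr ⟨hu.1, hu.2.le⟩)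
    have hind : ∀ S : Set ℝ, S.indicator (fun u => cos u - cos a) u
        = S.indicator 1 u * (cos u - cos a) := fun S => by
      by_cases h : u ∈ S <;> simp [h]
    simp only [hind, Set.indicator_of_mem hu, Pi.one_apply, one_mul, ← mul_assoc, ← sum_mul]
    exact mul_le_mul_of_nonneg_right (sum_mul_indicator_le hdisj hc hM u) (sub_nonneg.mpr hcos)
  rw [Set.indicator_of_notMem hu, mul_zero]
  refine sum_nonpos fun j _ => mul_nonpos_of_nonneg_of_nonpos (hc j).1 ?_
  refine Set.indicator_apply_nonpos fun huj => sub_nonpos.mpr (cos_le_cos_of_le_abs ha ?_ ?_)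
  · rw [Set.mem_Ico, not_and_or, not_le, not_lt] at hu
    rcases hu with hu | hu
    · rw [abs_of_neg (by linarith)]; linarith
    · exact hu.trans (le_abs_self u)
  · rw [abs_le]
    constructor <;> linarith [(hφ j).1, (hφ j).2, huj.1, huj.2]

theorem sin_mul_sum_mul_cos_le (hc : ∀ j, c j ∈ Set.Icc 0 M) (hM : 0 ≤ M)
    (hφ : ∀ j, φ j ∈ Set.Ioc (-π) π)
    (hdisj : Pairwise (Disjoint on fun j => Set.Ico (φ j - s) (φ j + s)))
    (hs : 0 ≤ s) (ha : 0 ≤ a) (has : a + s ≤ π) (hmass : s * ∑ j, c j = a * M) :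
    sin s * ∑ j, c j * cos (φ j) ≤ M * sin a := by
  have hint := integral_mono
    (integrable_finsetSum _ fun j _ => (integrable_indicator_Ico_cos_sub _ _ _).const_mul (c j))
    ((integrable_indicator_Ico_cos_sub _ _ _).const_mul M)
    (sum_mul_indicator_Ico_cos_sub_le hc hM hφ hdisj hs ha has)
  have harc : ∀ j, ∫ u, (Set.Ico (φ j - s) (φ j + s)).indicator (fun u => cos u - cos a) u
      = 2 * sin s * cos (φ j) - 2 * s * cos a := fun j => by
    rw [integral_indicator_Ico_cos_sub (by linarith), sin_add, sin_sub]; ring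
  have hcap : ∫ u, (Set.Ico (-a) a).indicator (fun u => cos u - cos a) u
      = 2 * sin a - 2 * a * cos a := by
    rw [integral_indicator_Ico_cos_sub (by linarith), sin_neg]; ring
  have hsum : ∑ j, c j * (2 * sin s * cos (φ j) - 2 * s * cos a)
      = 2 * sin s * ∑ j, c j * cos (φ j) - 2 * cos a * (s * ∑ j, c j) := by
    simp only [mul_sub, sum_sub_distrib, mul_sum]
    congr 1 <;> exact sum_congr rfl fun j _ => by ring
  rw [integral_finsetSum _ fun j _ => (integrable_indicator_Ico_cos_sub _ _ _).const_mul _] at hint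
  simp only [integral_const_mul, harc, hcap] at hint
  rw [hsum, hmass] at hint
  linarith

end Bathtub

noncomputable def reducedAngle (p : ℕ) (θ : ℝ) (j : ℕ) : ℝ :=
  toIocMod two_pi_pos (-π) (2 * π * j / p - θ)

theorem reducedAngle_mem_Ioc (p : ℕ) (θ : ℝ) (j : ℕ) : reducedAngle p θ j ∈ Set.Ioc (-π) π := by
  have := toIocMod_mem_Ioc two_pi_pos (-π) (2 * π * j / p - θ)
  rwa [show -π + 2 * π = π by ring] at this

theorem exists_reducedAngle_eq (p : ℕ) (θ : ℝ) (j : ℕ) :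
    ∃ n : ℤ, reducedAngle p θ j = 2 * π * j / p - θ - n * (2 * π) :=
  ⟨_, by rw [reducedAngle, toIocMod, zsmul_eq_mul]⟩

theorem cos_reducedAngle (p : ℕ) (θ : ℝ) (j : ℕ) :
    cos (reducedAngle p θ j) = cos (2 * π * j / p - θ) := by
  obtain ⟨n, hn⟩ := exists_reducedAngle_eq p θ j
  rw [hn, cos_sub_int_mul_two_pi]

theorem disjoint_Ico_reducedAngle {p : ℕ} (θ : ℝ) {j k : ℕ} (hj : j < p) (hk : k < p)
    (hjk : j ≠ k) :
    Disjoint (Set.Ico (reducedAngle p θ j - π / p) (reducedAngle p θ j + π / p))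
      (Set.Ico (reducedAngle p θ k - π / p) (reducedAngle p θ k + π / p)) := by
  rw [Set.disjoint_left]
  rintro u ⟨hj₁, hj₂⟩ ⟨hk₁, hk₂⟩
  obtain ⟨n, hn⟩ := exists_reducedAngle_eq p θ j
  obtain ⟨m, hm⟩ := exists_reducedAngle_eq p θ k
  have hp : (0 : ℝ) < p := by exact_mod_cast (Nat.zero_le j).trans_lt hj
  set d : ℤ := j - k + (m - n) * p with hd_def
  have hd : reducedAngle p θ j - reducedAngle p θ k = d * (2 * π / p) := by
    rw [hn, hm, hd_def]; push_cast; field_simp; ring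
  have hd0 : d = 0 := by
    have h2πp : 0 < 2 * π / p := by positivity
    have hclose : |reducedAngle p θ j - reducedAngle p θ k| < 2 * π / p := by
      rw [abs_lt]; constructor <;> linarith [show 2 * π / p = π / p + π / p by ring]
    rw [hd, abs_mul, abs_of_pos h2πp, mul_lt_iff_lt_one_left h2πp] at hclose
    exact Int.abs_lt_one_iff.mp (by exact_mod_cast hclose)
  exact hjk (Nat.ModEq.eq_of_lt_of_lt (Nat.modEq_iff_dvd.mpr ⟨m - n, by linarith⟩) hj hk)

theorem omg_pow (p j : ℕ) : omg p ^ j = Complex.exp (↑(2 * π * j / p) * Complex.I) := by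
  rw [omg, ← Complex.exp_nat_mul]
  push_cast
  ring_nf

theorem sum_omg_pow_val_eq_zero {p : ℕ} [NeZero p] (hp : 1 < p) :
    ∑ j : ZMod p, omg p ^ j.val = 0 := by
  obtain ⟨n, rfl⟩ : ∃ n, p = n + 1 := ⟨p - 1, by omega⟩
  exact (Fin.sum_univ_eq_sum_range (omg (n + 1) ^ ·) (n + 1)).trans
    ((Complex.isPrimitiveRoot_exp (n + 1) n.succ_ne_zero).geom_sum_eq_zero hp)

theorem norm_sum_ofReal_mul_exp_eq {ι : Type*} [Fintype ι] (c ψ : ι → ℝ) :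
    ‖∑ j, (c j : ℂ) * Complex.exp (ψ j * Complex.I)‖
      = ∑ j, c j * cos (ψ j - Complex.arg (∑ j, (c j : ℂ) * Complex.exp (ψ j * Complex.I))) := by
  set z := ∑ j, (c j : ℂ) * Complex.exp (ψ j * Complex.I)
  have hz : (‖z‖ : ℂ) = Complex.exp (-z.arg * Complex.I) * z := by
    calc (‖z‖ : ℂ)
        = Complex.exp (-z.arg * Complex.I) * (‖z‖ * Complex.exp (z.arg * Complex.I)) := by
          rw [mul_left_comm, ← Complex.exp_add, neg_mul, neg_add_cancel, Complex.exp_zero, mul_one]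
      _ = Complex.exp (-z.arg * Complex.I) * z := by rw [Complex.norm_mul_exp_arg_mul_I]
  rw [← Complex.ofReal_re ‖z‖, hz, mul_sum, Complex.re_sum]
  refine sum_congr rfl fun j _ => ?_
  rw [mul_left_comm, ← Complex.exp_add, ← add_mul, ← sub_eq_neg_add, ← Complex.ofReal_sub,
    Complex.re_ofReal_mul, Complex.exp_ofReal_mul_I_re]

theorem norm_sum_mul_omg_pow_le_of_sum_le_half {p : ℕ} [NeZero p] (hp : 1 < p) {c : ZMod p → ℝ}
    {M : ℝ} (hM : 0 < M) (hc : ∀ j, c j ∈ Set.Icc 0 M) (hhalf : ∑ j, c j ≤ p * M / 2) :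
    ‖∑ j, (c j : ℂ) * omg p ^ j.val‖ ≤ M * sin (π * (∑ j, c j) / (p * M)) / sin (π / p) := by
  have hp₂ : (2 : ℝ) ≤ p := by exact_mod_cast hp
  have hs : 0 < π / p := by positivity
  have hsπ : π / p ≤ π / 2 := div_le_div_of_nonneg_left pi_pos.le two_pos hp₂
  have ha : 0 ≤ π * (∑ j, c j) / (p * M) := by
    have := sum_nonneg fun j (_ : j ∈ univ) => (hc j).1
    positivity
  have haπ : π * (∑ j, c j) / (p * M) ≤ π / 2 := by
    rw [div_le_div_iff₀ (by positivity) two_pos]; nlinarith [pi_pos]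
  simp only [omg_pow, norm_sum_ofReal_mul_exp_eq, ← cos_reducedAngle]
  rw [le_div_iff₀ (sin_pos_of_pos_of_lt_pi hs (by linarith)), mul_comm]
  refine sin_mul_sum_mul_cos_le hc hM.le (fun j => reducedAngle_mem_Ioc _ _ _)
    (fun j k hjk => disjoint_Ico_reducedAngle _ (ZMod.val_lt j) (ZMod.val_lt k)
      ((ZMod.val_injective p).ne hjk)) hs.le ha (by linarith) ?_
  field_simp

theorem norm_sum_mul_omg_pow_le {p : ℕ} [NeZero p] (hp : 1 < p) {c : ZMod p → ℝ}
    {M : ℝ} (hM : 0 < M) (hc : ∀ j, c j ∈ Set.Icc 0 M) :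
    ‖∑ j, (c j : ℂ) * omg p ^ j.val‖ ≤ M * sin (π * (∑ j, c j) / (p * M)) / sin (π / p) := by
  rcases le_total (∑ j, c j) (p * M / 2) with hhalf | hhalf
  · exact norm_sum_mul_omg_pow_le_of_sum_le_half hp hM hc hhalf
  have hsum : ∑ j, (M - c j) = p * M - ∑ j, c j := by
    rw [sum_sub_distrib, sum_const, card_univ, ZMod.card, nsmul_eq_mul]
  have hcompl := norm_sum_mul_omg_pow_le_of_sum_le_half hp hM (c := fun j => M - c j)
    (fun j => ⟨sub_nonneg.mpr (hc j).2, sub_le_self M (hc j).1⟩) (by rw [hsum]; linarith)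
  have hneg : ∑ j, ((M - c j : ℝ) : ℂ) * omg p ^ j.val = -∑ j, (c j : ℂ) * omg p ^ j.val := by
    simp only [Complex.ofReal_sub, sub_mul, sum_sub_distrib, ← mul_sum,
      sum_omg_pow_val_eq_zero hp, mul_zero, zero_sub]
  rwa [hneg, norm_neg, hsum, mul_sub, sub_div, mul_div_cancel_right₀ _ (by positivity),
    sin_pi_sub] at hcompl

theorem AddMonoidHom.card_fiber_mul_card_of_surjective {G H : Type*} [AddGroup G] [Fintype G]
    [AddGroup H] [Fintype H] [DecidableEq H] {f : G →+ H} (hf : Surjective f) (y : H) :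
    #{x | f x = y} * Fintype.card H = Fintype.card G := by
  calc #{x | f x = y} * Fintype.card H = ∑ z, #{x | f x = z} := by
        rw [sum_congr rfl fun z _ => card_fiber_eq_of_mem_range f (hf z) (hf y), sum_const,
          card_univ, smul_eq_mul, mul_comm]
    _ = Fintype.card G := (card_eq_sum_card_fiberwise fun x _ => mem_univ (f x)).symm

theorem trace_mul_left_surjective {F K : Type*} [Field F] [Finite F] [Field K] [Finite K]
    [Algebra F K] {α : K} (hα : α ≠ 0) : Surjective fun x => Algebra.trace F K (α * x) := by
  intro y
  obtain ⟨b, rfl⟩ := Algebra.trace_surjective F K y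
  exact ⟨α⁻¹ * b, by simp only [mul_inv_cancel_left₀ hα]⟩

theorem card_filter_trace_mul_eq_mul_card {F K : Type*} [Field F] [Fintype F] [DecidableEq F]
    [Field K] [Fintype K] [Algebra F K] {α : K} (hα : α ≠ 0) (y : F) :
    #{x | Algebra.trace F K (α * x) = y} * Fintype.card F = Fintype.card K :=
  AddMonoidHom.card_fiber_mul_card_of_surjective
    (f := ((Algebra.trace F K).comp (LinearMap.mulLeft F α)).toAddMonoidHom)
    (trace_mul_left_surjective hα) y

theorem ihat_eq_sum_card_filter_mul_omg_pow (p : ℕ) [Fact p.Prime] (K : Type*) [Field K]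
    [Fintype K] [Algebra (ZMod p) K] (A : Finset K) (α : K) :
    ihat p K A α = (1 / Fintype.card K : ℂ) * ∑ j : ZMod p,
      ((#{x ∈ A | Algebra.trace (ZMod p) K (α * x) = j} : ℝ) : ℂ) * omg p ^ j.val := by
  rw [ihat]
  congr 1
  simp only [ite_mul, one_mul, zero_mul, sum_ite_mem, univ_inter]
  rw [← sum_fiberwise A (fun x => Algebra.trace (ZMod p) K (α * x))]
  refine sum_congr rfl fun j _ => ?_
  rw [sum_congr rfl fun x hx => by rw [chr, (mem_filter.mp hx).2], sum_const, nsmul_eq_mul]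
  push_cast
  rfl

theorem norm_ihat_le (p : ℕ) [Fact p.Prime] (K : Type*) [Field K] [Fintype K]
    [Algebra (ZMod p) K] (A : Finset K) {α : K} (hα : α ≠ 0) :
    ‖ihat p K A α‖ ≤ sin (π * #A / Fintype.card K) / (p * sin (π / p)) := by
  have hp := (Fact.out : p.Prime).one_lt
  have hp₀ : (0 : ℝ) < p := by positivity
  set T : K → ZMod p := fun x => Algebra.trace (ZMod p) K (α * x)
  set M : ℝ := Fintype.card K / p
  have hM : 0 < M := by positivity
  have hpM : p * M = Fintype.card K := mul_div_cancel₀ _ hp₀.ne'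
  have hc : ∀ j, (#{x ∈ A | T x = j} : ℝ) ∈ Set.Icc 0 M := fun j => by
    have hfiber := card_filter_trace_mul_eq_mul_card hα j
    rw [ZMod.card] at hfiber
    refine ⟨Nat.cast_nonneg _, (le_div_iff₀ hp₀).mpr ?_⟩
    exact_mod_cast (Nat.mul_le_mul_right _
      (card_le_card (filter_subset_filter _ (subset_univ A)))).trans hfiber.le
  have hsum : ∑ j, (#{x ∈ A | T x = j} : ℝ) = #A := by
    exact_mod_cast (card_eq_sum_card_fiberwise fun x _ => mem_univ (T x)).symm
  have hbound := norm_sum_mul_omg_pow_le hp hM hc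
  rw [hsum, hpM] at hbound
  rw [ihat_eq_sum_card_filter_mul_omg_pow, norm_mul, norm_div, norm_one, Complex.norm_natCast]
  calc 1 / (Fintype.card K : ℝ) * ‖∑ j, ((#{x ∈ A | T x = j} : ℝ) : ℂ) * omg p ^ j.val‖
      ≤ 1 / Fintype.card K * (M * sin (π * #A / Fintype.card K) / sin (π / p)) := by gcongr
    _ = sin (π * #A / Fintype.card K) / (p * sin (π / p)) := by
      rw [← hpM]; field_simp

theorem sum_sin_pi_mul_le {ι : Type*} [Fintype ι] {y : ι → ℝ} (hy : ∀ i, 0 ≤ y i)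
    (hsum : ∑ i, y i = 1) :
    ∑ i, sin (π * y i) ≤ Fintype.card ι * sin (π / Fintype.card ι) := by
  have : Nonempty ι := by
    by_contra h
    simp [not_nonempty_iff.mp h] at hsum
  have hn : (0 : ℝ) < Fintype.card ι := by exact_mod_cast Fintype.card_pos
  have hjensen := strictConcaveOn_sin_Icc.concaveOn.le_map_sum (t := univ)
    (w := fun _ => (Fintype.card ι : ℝ)⁻¹) (p := fun i => π * y i) (fun _ _ => by positivity)
    (by simp [hn.ne'])
    (fun i _ => ⟨mul_nonneg pi_pos.le (hy i), mul_le_of_le_one_right pi_pos.le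
      (hsum ▸ single_le_sum (fun j _ => hy j) (mem_univ i))⟩)
  simp only [smul_eq_mul, ← mul_sum, hsum, mul_one] at hjensen
  rwa [inv_mul_eq_div, div_le_iff₀' hn, inv_mul_eq_div] at hjensen

theorem stmt6_general (p w μ : ℕ) [Fact p.Prime]
    (K : Type) [Field K] [Fintype K] [Algebra (ZMod p) K]
    (hK : Fintype.card K = p ^ w)
    (A : Fin (2 ^ μ) → Finset K)
    (hA : ∑ i, (A i).card = p ^ w) :
    ∑ i, (⨆ α : {a : K // a ≠ 0}, ‖ihat p K (A i) α.val‖)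
      ≤ (2 : ℝ) ^ μ * Real.sin (Real.pi / 2 ^ μ) / (p * Real.sin (Real.pi / p)) := by
  have : Nonempty {a : K // a ≠ 0} := ⟨⟨1, one_ne_zero⟩⟩
  have hp : (1 : ℝ) < p := by exact_mod_cast (Fact.out : p.Prime).one_lt
  have hsin : 0 < sin (π / p) := sin_pos_of_pos_of_lt_pi (by positivity) (div_lt_self pi_pos hp)
  have hK₀ : (0 : ℝ) < Fintype.card K := by exact_mod_cast Fintype.card_pos
  have hmass : ∑ i, (#(A i) : ℝ) / Fintype.card K = 1 := by
    rw [← sum_div, div_eq_one_iff_eq hK₀.ne']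
    exact_mod_cast hA.trans hK.symm
  have hjensen := sum_sin_pi_mul_le (y := fun i => (#(A i) : ℝ) / Fintype.card K)
    (fun i => by positivity) hmass
  simp only [Fintype.card_fin, Nat.cast_pow, Nat.cast_ofNat, ← mul_div_assoc] at hjensen
  calc ∑ i, ⨆ α : {a : K // a ≠ 0}, ‖ihat p K (A i) α.val‖
      ≤ ∑ i, sin (π * #(A i) / Fintype.card K) / (p * sin (π / p)) :=
        sum_le_sum fun i _ => ciSup_le fun α => norm_ihat_le p K (A i) α.2
    _ = (∑ i, sin (π * #(A i) / Fintype.card K)) / (p * sin (π / p)) := (sum_div ..).symm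
    _ ≤ 2 ^ μ * sin (π / 2 ^ μ) / (p * sin (π / p)) := by gcongr

/-- for sets `A₁,…,A_{2^μ} ⊆ K` with `∑|A_i| = p^w`,
`∑_i max_{α≠0} |1̂_{A_i}(α)| ≤ c_μ`. -/
theorem stmt6 (p w μ : ℕ) [Fact p.Prime] (hw : 1 ≤ w) (hμ : 1 ≤ μ)
    (K : Type) [Field K] [Fintype K] [Algebra (ZMod p) K]
    (hK : Fintype.card K = p ^ w)
    (A : Fin (2 ^ μ) → Finset K)
    (hA : ∑ i, (A i).card = p ^ w) :
    ∑ i, (⨆ α : {a : K // a ≠ 0}, ‖ihat p K (A i) α.val‖)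
      ≤ (2 : ℝ) ^ μ * Real.sin (Real.pi / 2 ^ μ) / (p * Real.sin (Real.pi / p)) :=
  stmt6_general p w μ K hK A hA
end

section
/- Let C ⊆ F_{p^w}^n be an [n,k] linear code with dual distance d^⊥ and parity check matrix H with columns h₁,…,h_n. Partition [n] into I₁, I₂, I₃ with |I₁| = |I₂| = n−d^⊥+1. Then for any leakage functions τ⁽ʲ⁾ : F_{p^w} → F_2^μ, SD(τ(C), τ(U_n)) ≤ (1/2)·2^{μ(n−d^⊥+1)}·∑_{(ℓ_j)_{j∈I₃}} max_{β∈F_{p^w}^{n−k}∖{0}} ∏_{j∈I₃} |1̂_{ℓ_j}(⟨β, h_j⟩)|. -/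
open Finset Classical

open Classical in
/-- Probability that coordinatewise leakage `τ` of a uniform element of `SF ⊆ K^n`
equals `ℓ`. -/
noncomputable def leakProb {K : Type*} [Fintype K] {n μ : ℕ}
    (τ : Fin n → K → (Fin μ → ZMod 2)) (SF : Finset (Fin n → K))
    (ℓ : Fin n → (Fin μ → ZMod 2)) : ℝ :=
  ((SF.filter fun x => ∀ j, τ j (x j) = ℓ j).card : ℝ) / SF.card

/-
Expand the indicator of every leakage fibre `τ_j⁻¹(ℓ_j)` in the additive characters
`x ↦ ψ(α x)`, `ψ = ω_p^{Tr(·)}`. Averaging over a linear code `D` kills every frequency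
`g ∉ D^⊥`, so `Pr_D[τ = ℓ] = ∑_{g ∈ D^⊥} ∏_j 1̂_{ℓ_j}(g_j)`; comparing `D = C` with the whole
space leaves the same sum over the nonzero dual codewords `g = βH`. On `I₃` the product is
bounded by the maximum over `β`. A dual codeword vanishing on `n - d^⊥ + 1` coordinates is zero,
so restriction to `I₁` or `I₂` is injective on `C^⊥`; Cauchy–Schwarz and Parseval then bound the
rest by `∏_{j ∈ I₁ ∪ I₂} √(|τ_j⁻¹(ℓ_j)| / q)`. Summing over the leakage on `I₁ ∪ I₂`, a second
Cauchy–Schwarz gives at most `√(2^μ)` per coordinate.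
-/

lemma AddChar.map_sum_eq_prod {A M ι : Type*} [AddCommMonoid A] [CommMonoid M]
    (ψ : AddChar A M) (s : Finset ι) (f : ι → A) : ψ (∑ i ∈ s, f i) = ∏ i ∈ s, ψ (f i) := by
  induction s using Finset.cons_induction with
  | empty => simp
  | cons a s ha ih => rw [Finset.sum_cons, Finset.prod_cons, AddChar.map_add_eq_mul, ih]

section TraceCharacter

variable (p : ℕ) [Fact p.Prime] (K : Type*) [Field K] [Algebra (ZMod p) K]

noncomputable def traceChar : AddChar K ℂ :=
  ZMod.stdAddChar.compAddMonoidHom (Algebra.trace (ZMod p) K).toAddMonoidHom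

variable {p K}

lemma chr_eq_traceChar (x : K) : chr p K x = traceChar p K x := by
  rw [chr, omg, traceChar, AddChar.compAddMonoidHom_apply, LinearMap.toAddMonoidHom_coe,
    ZMod.stdAddChar_apply, ZMod.toCircle_apply, ← Complex.exp_nat_mul]
  ring_nf

lemma isPrimitive_traceChar [Finite K] : (traceChar p K).IsPrimitive := by
  refine AddChar.IsPrimitive.of_ne_one fun h => ?_
  have : Module.Finite (ZMod p) K := Module.Finite.of_finite
  obtain ⟨x, hx⟩ := Algebra.trace_surjective (ZMod p) K 1
  have h1 : ZMod.stdAddChar (1 : ZMod p) = ZMod.stdAddChar (0 : ZMod p) := by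
    rw [AddChar.map_zero_eq_one, ← hx]
    exact DFunLike.congr_fun h x
  exact one_ne_zero (ZMod.injective_stdAddChar h1 : (1 : ZMod p) = 0)

end TraceCharacter

section IndicatorFourier

variable {R : Type*} [CommRing R] [Fintype R] {ψ : AddChar R ℂ}

noncomputable def indicatorFourier (ψ : AddChar R ℂ) (A : Finset R) (α : R) : ℂ :=
  (Fintype.card R : ℂ)⁻¹ * ∑ x ∈ A, ψ (α * x)

lemma ihat_eq_indicatorFourier {p : ℕ} [Fact p.Prime] {K : Type*} [Field K] [Fintype K]
    [Algebra (ZMod p) K] (A : Finset K) (α : K) :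
    ihat p K A α = indicatorFourier (traceChar p K) A α := by
  simp only [ihat, indicatorFourier, one_div, boole_mul, ← Finset.sum_filter,
    Finset.filter_mem_eq_inter, Finset.univ_inter, chr_eq_traceChar]

lemma sum_indicatorFourier_mul_eq_ite (hψ : ψ.IsPrimitive) (A : Finset R) (x : R) :
    ∑ α, indicatorFourier ψ A α * ψ (-(α * x)) = if x ∈ A then 1 else 0 := by
  have hq : (Fintype.card R : ℂ) ≠ 0 := Nat.cast_ne_zero.mpr Fintype.card_ne_zero
  have orth : ∀ y, ∑ α, ψ (α * y) * ψ (-(α * x)) = if y = x then (Fintype.card R : ℂ) else 0 := by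
    intro y
    simp_rw [← AddChar.map_add_eq_mul, ← sub_eq_add_neg, ← mul_sub,
      AddChar.sum_mulShift _ hψ, sub_eq_zero]
    split_ifs <;> simp
  calc ∑ α, indicatorFourier ψ A α * ψ (-(α * x))
      = (Fintype.card R : ℂ)⁻¹ * ∑ y ∈ A, ∑ α, ψ (α * y) * ψ (-(α * x)) := by
        simp_rw [indicatorFourier, mul_assoc, ← Finset.mul_sum, Finset.sum_mul]
        rw [Finset.sum_comm]
    _ = if x ∈ A then 1 else 0 := by
        simp_rw [orth, Finset.sum_ite_eq']
        split_ifs <;> simp [hq]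

lemma sum_norm_indicatorFourier_sq (hψ : ψ.IsPrimitive) (A : Finset R) :
    ∑ α, ‖indicatorFourier ψ A α‖ ^ 2 = #A / Fintype.card R := by
  have conj_eq : ∀ α, starRingEnd ℂ (indicatorFourier ψ A α) =
      (Fintype.card R : ℂ)⁻¹ * ∑ y ∈ A, ψ (-(α * y)) := by
    intro α
    simp [indicatorFourier, map_sum, AddChar.map_neg_eq_conj]
  have hC : ((∑ α, ‖indicatorFourier ψ A α‖ ^ 2 : ℝ) : ℂ) = #A / Fintype.card R :=
    calc ((∑ α, ‖indicatorFourier ψ A α‖ ^ 2 : ℝ) : ℂ)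
        = ∑ α, indicatorFourier ψ A α * starRingEnd ℂ (indicatorFourier ψ A α) := by
          push_cast
          simp_rw [Complex.mul_conj']
      _ = (Fintype.card R : ℂ)⁻¹ * ∑ y ∈ A, ∑ α, indicatorFourier ψ A α * ψ (-(α * y)) := by
          simp_rw [conj_eq, Finset.mul_sum, mul_left_comm _ (Fintype.card R : ℂ)⁻¹]
          rw [Finset.sum_comm]
      _ = #A / Fintype.card R := by
          simp_rw [sum_indicatorFourier_mul_eq_ite hψ]
          simp [div_eq_inv_mul]
  exact_mod_cast hC

lemma prod_indicator_eq_sum_indicatorFourier {ι : Type*} [Fintype ι] [DecidableEq ι]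
    (hψ : ψ.IsPrimitive) (A : ι → Finset R) (x : ι → R) :
    (∏ j, if x j ∈ A j then (1 : ℂ) else 0) =
      ∑ g, (∏ j, indicatorFourier ψ (A j) (g j)) * ψ (x ⬝ᵥ -g) := by
  simp_rw [← sum_indicatorFourier_mul_eq_ite hψ, Fintype.prod_sum, dotProduct,
    AddChar.map_sum_eq_prod ψ, ← Finset.prod_mul_distrib, Pi.neg_apply, mul_neg, mul_comm (x _)]

end IndicatorFourier

section DualCode

variable {R ι : Type*} [CommRing R] [Fintype ι]

def dualCode (D : Submodule R (ι → R)) : Submodule R (ι → R) where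
  carrier := {g | ∀ c ∈ D, c ⬝ᵥ g = 0}
  add_mem' hg hg' c hc := by simp [dotProduct_add, hg c hc, hg' c hc]
  zero_mem' c _ := dotProduct_zero c
  smul_mem' a g hg c hc := by simp [dotProduct_smul, hg c hc]

lemma mem_dualCode {D : Submodule R (ι → R)} {g : ι → R} :
    g ∈ dualCode D ↔ ∀ c ∈ D, c ⬝ᵥ g = 0 := Iff.rfl

lemma dualCode_top [DecidableEq ι] : dualCode (⊤ : Submodule R (ι → R)) = ⊥ := by
  refine (Submodule.eq_bot_iff _).mpr fun g hg => funext fun j => ?_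
  simpa using hg (Pi.single j 1) Submodule.mem_top

lemma sum_addChar_dotProduct [Fintype R] {ψ : AddChar R ℂ} (hψ : ψ.IsPrimitive)
    (D : Submodule R (ι → R)) (DF : Finset (ι → R)) (hDF : ∀ x, x ∈ DF ↔ x ∈ D) (g : ι → R) :
    ∑ x ∈ DF, ψ (x ⬝ᵥ g) = if g ∈ dualCode D then (#DF : ℂ) else 0 := by
  split_ifs with hg
  · rw [Finset.sum_congr rfl fun x hx => by rw [hg x ((hDF x).mp hx), AddChar.map_zero_eq_one]]
    simp
  obtain ⟨c, hcD, hcg⟩ : ∃ c ∈ D, c ⬝ᵥ g ≠ 0 := by simpa [mem_dualCode] using hg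
  obtain ⟨s, hs⟩ := AddChar.ne_one_iff.mp (hψ hcg)
  -- translating by the codeword `s • c`, on which `ψ (· ⬝ᵥ g) ≠ 1`, fixes the sum
  have hshift : ψ ((s • c) ⬝ᵥ g) * ∑ x ∈ DF, ψ (x ⬝ᵥ g) = ∑ x ∈ DF, ψ (x ⬝ᵥ g) := by
    rw [Finset.mul_sum]
    refine Finset.sum_nbij' (· + s • c) (· - s • c) ?_ ?_ (by simp) (by simp) ?_
    · intro x hx; simpa [hDF] using D.add_mem ((hDF x).mp hx) (D.smul_mem s hcD)
    · intro x hx; simpa [hDF] using D.sub_mem ((hDF x).mp hx) (D.smul_mem s hcD)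
    · intro x _; rw [add_dotProduct, AddChar.map_add_eq_mul, mul_comm]
  refine eq_zero_of_mul_eq_self_left ?_ hshift
  rw [smul_dotProduct, smul_eq_mul, mul_comm]
  exact hs

end DualCode

lemma injOn_restrict_of_lt_card_add {ι R : Type*} [Fintype ι] [AddGroup R]
    (S : AddSubgroup (ι → R)) (d : ℕ) (hd : ∀ y ∈ S, y ≠ 0 → d ≤ hammingNorm y)
    (I : Finset ι) (hI : Fintype.card ι < #I + d) :
    Set.InjOn (fun (g : ι → R) (j : I) => g j) S := by
  intro g hg g' hg' hgg'
  by_contra hne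
  have hzero : ∀ j ∈ I, (g - g') j = 0 := fun j hj => by
    simpa [sub_eq_zero] using congrFun hgg' ⟨j, hj⟩
  have hweight : hammingNorm (g - g') ≤ Fintype.card ι - #I := by
    rw [← Finset.card_compl]
    refine Finset.card_le_card fun j hj => Finset.mem_compl.mpr fun hjI => ?_
    exact (Finset.mem_filter.mp hj).2 (hzero j hjI)
  have := hd _ (S.sub_mem hg hg') (sub_ne_zero.mpr hne)
  have := Finset.card_le_univ I
  omega

section Counting

lemma sum_prod_le_prod_sum_of_injOn {ι R : Type*} [Fintype R] (G : Finset (ι → R))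
    (I : Finset ι) (hG : Set.InjOn (fun (g : ι → R) (j : I) => g j) ↑G) (f : ι → R → ℝ)
    (hf : ∀ j α, 0 ≤ f j α) :
    ∑ g ∈ G, ∏ j ∈ I, f j (g j) ≤ ∏ j ∈ I, ∑ α, f j α := by
  calc ∑ g ∈ G, ∏ j ∈ I, f j (g j)
      = ∑ γ ∈ G.image (fun (g : ι → R) (j : I) => g j), ∏ j : I, f j (γ j) := by
        rw [Finset.sum_image hG]
        simp_rw [Finset.prod_coe_sort I (fun j => f j _)]
    _ ≤ ∑ γ : I → R, ∏ j : I, f j (γ j) :=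
        Finset.sum_le_sum_of_subset_of_nonneg (Finset.subset_univ _)
          fun _ _ _ => Finset.prod_nonneg fun _ _ => hf _ _
    _ = ∏ j ∈ I, ∑ α, f j α := by
        rw [← Fintype.prod_sum, Finset.prod_coe_sort I (fun j => ∑ α, f j α)]

lemma sum_prod_mul_prod_le_of_injOn {ι R : Type*} [Fintype R] (G : Finset (ι → R))
    (I₁ I₂ : Finset ι) (hG₁ : Set.InjOn (fun (g : ι → R) (j : I₁) => g j) ↑G)
    (hG₂ : Set.InjOn (fun (g : ι → R) (j : I₂) => g j) ↑G) (f : ι → R → ℝ) :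
    ∑ g ∈ G, (∏ j ∈ I₁, f j (g j)) * ∏ j ∈ I₂, f j (g j) ≤
      (∏ j ∈ I₁, √(∑ α, f j α ^ 2)) * ∏ j ∈ I₂, √(∑ α, f j α ^ 2) := by
  have hsq : ∀ j α, 0 ≤ f j α ^ 2 := fun j α => sq_nonneg _
  have bound : ∀ I : Finset ι, Set.InjOn (fun (g : ι → R) (j : I) => g j) ↑G →
      √(∑ g ∈ G, (∏ j ∈ I, f j (g j)) ^ 2) ≤ ∏ j ∈ I, √(∑ α, f j α ^ 2) := fun I hI => by
    rw [← Real.sqrt_prod _ fun j _ => Finset.sum_nonneg fun α _ => hsq j α]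
    simp_rw [← Finset.prod_pow]
    exact Real.sqrt_le_sqrt (sum_prod_le_prod_sum_of_injOn G I hI _ hsq)
  exact (Real.sum_mul_le_sqrt_mul_sqrt G _ _).trans
    (mul_le_mul (bound I₁ hG₁) (bound I₂ hG₂) (Real.sqrt_nonneg _)
      (Finset.prod_nonneg fun _ _ => Real.sqrt_nonneg _))

lemma sum_mul_prod_compl_eq {ι X M : Type*} [Fintype ι] [DecidableEq ι] [Fintype X]
    [CommSemiring M] (s : Finset ι) (T : (s → X) → M) (r : ι → X → M) :
    ∑ ℓ : ι → X, T (fun j : s => ℓ j) * ∏ j ∈ sᶜ, r j (ℓ j) =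
      (∑ t, T t) * ∏ j ∈ sᶜ, ∑ v, r j v := by
  have hcompl : ∀ j, j ∈ sᶜ ↔ j ∉ s := fun j => Finset.mem_compl
  rw [Finset.prod_subtype sᶜ hcompl, Fintype.prod_sum, Finset.sum_mul_sum,
    ← Fintype.sum_prod_type', ← Fintype.sum_equiv (Equiv.piEquivPiSubtypeProd (· ∈ s) fun _ => X)]
  intro ℓ
  rw [Finset.prod_subtype sᶜ hcompl]
  rfl

lemma compl_eq_union_of_partition {α : Type*} [Fintype α] [DecidableEq α] {s t u : Finset α}
    (hsu : Disjoint s u) (htu : Disjoint t u) (h : s ∪ t ∪ u = univ) : uᶜ = s ∪ t :=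
  IsCompl.compl_eq ⟨(Finset.disjoint_union_left.mpr ⟨hsu, htu⟩).symm,
    codisjoint_iff.mpr (by rw [sup_comm]; exact h)⟩

end Counting

section LeakFiber

variable {R ι V : Type*} [Fintype R] [DecidableEq V]

def leakFiber (τ : ι → R → V) (j : ι) (v : V) : Finset R :=
  univ.filter fun x => τ j x = v

lemma sum_sqrt_card_leakFiber_le [Fintype V] (τ : ι → R → V) (j : ι) :
    ∑ v, √(#(leakFiber τ j v) / Fintype.card R) ≤ √(Fintype.card V) := by
  have hsum : ∑ v, (#(leakFiber τ j v) / Fintype.card R : ℝ) ≤ 1 := by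
    rw [← Finset.sum_div, ← Finset.card_univ,
      Finset.card_eq_sum_card_fiberwise (f := τ j) (t := univ) (by simp)]
    simpa [leakFiber] using div_self_le_one _
  calc ∑ v, √(#(leakFiber τ j v) / Fintype.card R)
      = ∑ v, √1 * √(#(leakFiber τ j v) / Fintype.card R) := by simp
    _ ≤ √(∑ _v : V, 1) * √(∑ v, (#(leakFiber τ j v) / Fintype.card R : ℝ)) :=
        Real.sum_sqrt_mul_sqrt_le univ (fun _ => zero_le_one) (fun _ => by positivity)
    _ ≤ √(Fintype.card V) := by
        simpa using mul_le_of_le_one_right (Real.sqrt_nonneg _) (Real.sqrt_le_one.mpr hsum)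

lemma sum_mul_prod_sqrt_card_leakFiber_le [Fintype ι] [DecidableEq ι] [Fintype V]
    (τ : ι → R → V) (s : Finset ι) (T : (s → V) → ℝ) (hT : ∀ t, 0 ≤ T t) :
    ∑ ℓ : ι → V, T (fun j : s => ℓ j) * ∏ j ∈ sᶜ, √(#(leakFiber τ j (ℓ j)) / Fintype.card R) ≤
      (∑ t, T t) * √(Fintype.card V) ^ #sᶜ := by
  rw [sum_mul_prod_compl_eq s T fun j v => √(#(leakFiber τ j v) / Fintype.card R),
    ← Finset.prod_const]
  exact mul_le_mul_of_nonneg_left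
    (Finset.prod_le_prod (fun _ _ => Finset.sum_nonneg fun _ _ => Real.sqrt_nonneg _)
      fun j _ => sum_sqrt_card_leakFiber_le τ j)
    (Finset.sum_nonneg fun t _ => hT t)

end LeakFiber

section Leakage

variable {R : Type*} [CommRing R] [Fintype R] {ψ : AddChar R ℂ}

lemma leakProb_eq_sum_dualCode {n μ : ℕ} (hψ : ψ.IsPrimitive) (D : Submodule R (Fin n → R))
    (DF : Finset (Fin n → R)) (hDF : ∀ x, x ∈ DF ↔ x ∈ D) (τ : Fin n → R → (Fin μ → ZMod 2))
    (ℓ : Fin n → (Fin μ → ZMod 2)) :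
    (leakProb τ DF ℓ : ℂ) =
      ∑ g ∈ univ.filter (· ∈ dualCode D), ∏ j, indicatorFourier ψ (leakFiber τ j (ℓ j)) (g j) := by
  have hDF0 : (#DF : ℂ) ≠ 0 := by
    exact_mod_cast (Finset.card_pos.mpr ⟨0, (hDF 0).mpr D.zero_mem⟩).ne'
  have hcard : (#(DF.filter fun x => ∀ j, τ j (x j) = ℓ j) : ℂ) =
      #DF * ∑ g ∈ univ.filter (· ∈ dualCode D),
        ∏ j, indicatorFourier ψ (leakFiber τ j (ℓ j)) (g j) :=
    calc (#(DF.filter fun x => ∀ j, τ j (x j) = ℓ j) : ℂ)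
        = ∑ x ∈ DF, ∏ j, if x j ∈ leakFiber τ j (ℓ j) then (1 : ℂ) else 0 := by
          simp [leakFiber, Finset.prod_boole]
      _ = ∑ g, (∏ j, indicatorFourier ψ (leakFiber τ j (ℓ j)) (g j)) *
            ∑ x ∈ DF, ψ (x ⬝ᵥ -g) := by
          simp_rw [prod_indicator_eq_sum_indicatorFourier hψ, Finset.mul_sum]
          exact Finset.sum_comm
      _ = _ := by
          simp_rw [sum_addChar_dotProduct hψ D DF hDF, neg_mem_iff, Finset.mul_sum,
            Finset.sum_filter, mul_ite, mul_zero, mul_comm]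
  rw [leakProb, Complex.ofReal_div, Complex.ofReal_natCast, Complex.ofReal_natCast, hcard,
    mul_div_cancel_left₀ _ hDF0]

lemma leakProb_sub_leakProb_univ {n μ : ℕ} (hψ : ψ.IsPrimitive) (C : Submodule R (Fin n → R))
    (CF : Finset (Fin n → R)) (hCF : ∀ x, x ∈ CF ↔ x ∈ C) (τ : Fin n → R → (Fin μ → ZMod 2))
    (ℓ : Fin n → (Fin μ → ZMod 2)) :
    ((leakProb τ CF ℓ - leakProb τ univ ℓ : ℝ) : ℂ) =
      ∑ g ∈ (univ.filter (· ∈ dualCode C)).erase 0,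
        ∏ j, indicatorFourier ψ (leakFiber τ j (ℓ j)) (g j) := by
  rw [Complex.ofReal_sub, leakProb_eq_sum_dualCode hψ C CF hCF,
    leakProb_eq_sum_dualCode hψ ⊤ univ (by simp), dualCode_top,
    Finset.sum_erase_eq_sub (by simp)]
  simp [Submodule.mem_bot, Finset.filter_eq']

lemma abs_leakProb_sub_le {n μ : ℕ} (hψ : ψ.IsPrimitive) (C : Submodule R (Fin n → R))
    (CF : Finset (Fin n → R)) (hCF : ∀ x, x ∈ CF ↔ x ∈ C) (d : ℕ)
    (hd : ∀ y ∈ dualCode C, y ≠ 0 → d ≤ hammingNorm y) (I₁ I₂ I₃ : Finset (Fin n))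
    (h12 : Disjoint I₁ I₂) (hcompl : I₃ᶜ = I₁ ∪ I₂) (hI₁ : n < #I₁ + d) (hI₂ : n < #I₂ + d)
    (τ : Fin n → R → (Fin μ → ZMod 2)) (ℓ : Fin n → (Fin μ → ZMod 2)) (M : ℝ) (hM0 : 0 ≤ M)
    (hM : ∀ g ∈ dualCode C, g ≠ 0 →
      ∏ j ∈ I₃, ‖indicatorFourier ψ (leakFiber τ j (ℓ j)) (g j)‖ ≤ M) :
    |leakProb τ CF ℓ - leakProb τ univ ℓ| ≤
      M * ∏ j ∈ I₃ᶜ, √(#(leakFiber τ j (ℓ j)) / Fintype.card R) := by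
  set G := (univ.filter (· ∈ dualCode C)).erase 0
  set F : Fin n → R → ℝ := fun j α => ‖indicatorFourier ψ (leakFiber τ j (ℓ j)) α‖
  have hG : ∀ g ∈ G, g ∈ dualCode C ∧ g ≠ 0 := fun g hg => by simp_all [G]
  have hinj : ∀ I : Finset (Fin n), n < #I + d →
      Set.InjOn (fun (g : Fin n → R) (j : I) => g j) ↑G := fun I hI =>
    (injOn_restrict_of_lt_card_add (dualCode C).toAddSubgroup d hd I
      (by simpa using hI)).mono fun g hg => (hG g hg).1
  calc |leakProb τ CF ℓ - leakProb τ univ ℓ|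
      = ‖∑ g ∈ G, ∏ j, indicatorFourier ψ (leakFiber τ j (ℓ j)) (g j)‖ := by
        rw [← leakProb_sub_leakProb_univ hψ C CF hCF, Complex.norm_real, Real.norm_eq_abs]
    _ ≤ ∑ g ∈ G, ∏ j, F j (g j) := by
        simpa only [F, norm_prod] using norm_sum_le G
          fun g => ∏ j, indicatorFourier ψ (leakFiber τ j (ℓ j)) (g j)
    _ = ∑ g ∈ G, (∏ j ∈ I₃, F j (g j)) * ((∏ j ∈ I₁, F j (g j)) * ∏ j ∈ I₂, F j (g j)) := by
        simp_rw [← Finset.prod_mul_prod_compl I₃, hcompl, Finset.prod_union h12]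
    _ ≤ ∑ g ∈ G, M * ((∏ j ∈ I₁, F j (g j)) * ∏ j ∈ I₂, F j (g j)) := by
        gcongr with g hg
        exact hM g (hG g hg).1 (hG g hg).2
    _ ≤ M * ((∏ j ∈ I₁, √(∑ α, F j α ^ 2)) * ∏ j ∈ I₂, √(∑ α, F j α ^ 2)) := by
        rw [← Finset.mul_sum]
        exact mul_le_mul_of_nonneg_left
          (sum_prod_mul_prod_le_of_injOn G I₁ I₂ (hinj I₁ hI₁) (hinj I₂ hI₂) F) hM0
    _ = M * ∏ j ∈ I₃ᶜ, √(#(leakFiber τ j (ℓ j)) / Fintype.card R) := by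
        simp only [F, hcompl, Finset.prod_union h12, sum_norm_indicatorFourier_sq hψ]

lemma abs_leakProb_sub_le_iSup {n m μ : ℕ} (hψ : ψ.IsPrimitive) (C : Submodule R (Fin n → R))
    (CF : Finset (Fin n → R)) (hCF : ∀ x, x ∈ CF ↔ x ∈ C) (h : Fin n → Fin m → R)
    (hH : ∀ y ∈ dualCode C, ∃ β : Fin m → R, y = fun j => ∑ i, β i * h j i) (d : ℕ)
    (hd : ∀ y ∈ dualCode C, y ≠ 0 → d ≤ hammingNorm y) (I₁ I₂ I₃ : Finset (Fin n))
    (h12 : Disjoint I₁ I₂) (hcompl : I₃ᶜ = I₁ ∪ I₂) (hI₁ : n < #I₁ + d) (hI₂ : n < #I₂ + d)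
    (τ : Fin n → R → (Fin μ → ZMod 2)) (ℓ : Fin n → (Fin μ → ZMod 2)) :
    |leakProb τ CF ℓ - leakProb τ univ ℓ| ≤
      (⨆ β : {b : Fin m → R // b ≠ 0}, ∏ j : I₃,
        ‖indicatorFourier ψ (leakFiber τ j (ℓ j)) (∑ i, β.val i * h j i)‖) *
      ∏ j ∈ I₃ᶜ, √(#(leakFiber τ j (ℓ j)) / Fintype.card R) := by
  refine abs_leakProb_sub_le hψ C CF hCF d hd I₁ I₂ I₃ h12 hcompl hI₁ hI₂ τ ℓ _
    (Real.iSup_nonneg fun _ => Finset.prod_nonneg fun _ _ => norm_nonneg _) fun g hg hg0 => ?_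
  obtain ⟨β, rfl⟩ := hH g hg
  have hβ : β ≠ 0 := by rintro rfl; exact hg0 (funext fun j => by simp)
  rw [← Finset.prod_coe_sort]
  exact le_ciSup (f := fun b : {b : Fin m → R // b ≠ 0} => ∏ j : I₃,
    ‖indicatorFourier ψ (leakFiber τ j (ℓ j)) (∑ i, b.val i * h j i)‖)
    (Finite.bddAbove_range _) ⟨β, hβ⟩

end Leakage

theorem stmt14_general (p n k μ dperp : ℕ) [Fact p.Prime]
    (K : Type) [Field K] [Fintype K] [Algebra (ZMod p) K]
    (C : Submodule K (Fin n → K))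
    (CF : Finset (Fin n → K)) (hCF : ∀ x, x ∈ CF ↔ x ∈ C)
    (h : Fin n → (Fin (n - k) → K))
    (hH : ∀ y : Fin n → K, (∀ c ∈ C, ∑ i, c i * y i = 0) ↔
      ∃ β : Fin (n - k) → K, y = fun j => ∑ i, β i * h j i)
    (hdperp : ∀ y : Fin n → K, (∀ c ∈ C, ∑ i, c i * y i = 0) → y ≠ 0 →
      dperp ≤ hammingNorm y)
    (I₁ I₂ I₃ : Finset (Fin n))
    (h12 : Disjoint I₁ I₂) (h13 : Disjoint I₁ I₃) (h23 : Disjoint I₂ I₃)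
    (hcover : I₁ ∪ I₂ ∪ I₃ = Finset.univ)
    (hI₁ : I₁.card = n - dperp + 1) (hI₂ : I₂.card = n - dperp + 1)
    (τ : Fin n → K → (Fin μ → ZMod 2)) :
    (1 / 2 : ℝ) * ∑ ℓ : Fin n → (Fin μ → ZMod 2),
        |leakProb τ CF ℓ - leakProb τ Finset.univ ℓ|
      ≤ (1 / 2 : ℝ) * (2 : ℝ) ^ (μ * (n - dperp + 1)) *
          ∑ ℓ : {j // j ∈ I₃} → (Fin μ → ZMod 2),
            ⨆ β : {b : Fin (n - k) → K // b ≠ 0},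
              ∏ j : {j // j ∈ I₃},
                ‖ihat p K
                  (Finset.univ.filter fun x : K => τ j.val x = ℓ j)
                  (∑ i, β.val i * h j.val i)‖ := by
  simp only [ihat_eq_indicatorFourier]
  set T : ({j // j ∈ I₃} → (Fin μ → ZMod 2)) → ℝ := fun ℓ₃ =>
    ⨆ β : {b : Fin (n - k) → K // b ≠ 0}, ∏ j : I₃,
      ‖indicatorFourier (traceChar p K) (leakFiber τ j (ℓ₃ j)) (∑ i, β.val i * h j i)‖
  have hcompl : I₃ᶜ = I₁ ∪ I₂ := compl_eq_union_of_partition h13 h23 hcover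
  have hcard : #I₃ᶜ = 2 * (n - dperp + 1) := by
    rw [hcompl, Finset.card_union_of_disjoint h12, hI₁, hI₂, two_mul]
  have hpointwise (ℓ : Fin n → (Fin μ → ZMod 2)) :
      |leakProb τ CF ℓ - leakProb τ univ ℓ| ≤
        T (fun j => ℓ j) * ∏ j ∈ I₃ᶜ, √(#(leakFiber τ j (ℓ j)) / Fintype.card K) :=
    abs_leakProb_sub_le_iSup (isPrimitive_traceChar (p := p)) C CF hCF h
      (fun y hy => (hH y).mp hy) dperp (fun y hy => hdperp y hy) I₁ I₂ I₃ h12 hcompl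
      (by omega) (by omega) τ ℓ
  calc (1 / 2 : ℝ) * ∑ ℓ : Fin n → (Fin μ → ZMod 2), |leakProb τ CF ℓ - leakProb τ univ ℓ|
      ≤ (1 / 2 : ℝ) * ∑ ℓ : Fin n → (Fin μ → ZMod 2), T (fun j => ℓ j) *
          ∏ j ∈ I₃ᶜ, √(#(leakFiber τ j (ℓ j)) / Fintype.card K) := by
        gcongr with ℓ
        exact hpointwise ℓ
    _ ≤ (1 / 2 : ℝ) * ((∑ ℓ₃, T ℓ₃) * √(Fintype.card (Fin μ → ZMod 2)) ^ #I₃ᶜ) :=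
        mul_le_mul_of_nonneg_left (sum_mul_prod_sqrt_card_leakFiber_le τ I₃ T fun _ =>
          Real.iSup_nonneg fun _ => Finset.prod_nonneg fun _ _ => norm_nonneg _) (by norm_num)
    _ = _ := by
        rw [hcard, pow_mul, Real.sq_sqrt (Nat.cast_nonneg _)]
        simp only [T, leakFiber, Fintype.card_fun, ZMod.card, Fintype.card_fin]
        push_cast
        ring

open Classical in
/-- with `H` a parity-check matrix of `C` (columns `h j`), and
`[n]` partitioned into `I₁, I₂, I₃` with `|I₁| = |I₂| = n − d^⊥ + 1`,
`SD(τ(C),τ(U_n)) ≤ (1/2)·2^{μ(n−d^⊥+1)}·∑_{(ℓ_j)_{j∈I₃}} max_{β≠0} ∏_{j∈I₃}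
|1̂_{ℓ_j}(⟨β,h_j⟩)|`. -/
theorem stmt14 (p w n k μ dperp : ℕ) [Fact p.Prime] (hw : 1 ≤ w)
    (K : Type) [Field K] [Fintype K] [Algebra (ZMod p) K]
    (hK : Fintype.card K = p ^ w)
    (C : Submodule K (Fin n → K)) (hk : Module.finrank K C = k) (hkn : k ≤ n)
    (CF : Finset (Fin n → K)) (hCF : ∀ x, x ∈ CF ↔ x ∈ C)
    (h : Fin n → (Fin (n - k) → K))
    (hH : ∀ y : Fin n → K, (∀ c ∈ C, ∑ i, c i * y i = 0) ↔
      ∃ β : Fin (n - k) → K, y = fun j => ∑ i, β i * h j i)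
    (hdperp : ∀ y : Fin n → K, (∀ c ∈ C, ∑ i, c i * y i = 0) → y ≠ 0 →
      dperp ≤ hammingNorm y)
    (I₁ I₂ I₃ : Finset (Fin n))
    (h12 : Disjoint I₁ I₂) (h13 : Disjoint I₁ I₃) (h23 : Disjoint I₂ I₃)
    (hcover : I₁ ∪ I₂ ∪ I₃ = Finset.univ)
    (hI₁ : I₁.card = n - dperp + 1) (hI₂ : I₂.card = n - dperp + 1)
    (τ : Fin n → K → (Fin μ → ZMod 2)) :
    (1 / 2 : ℝ) * ∑ ℓ : Fin n → (Fin μ → ZMod 2),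
        |leakProb τ CF ℓ - leakProb τ Finset.univ ℓ|
      ≤ (1 / 2 : ℝ) * (2 : ℝ) ^ (μ * (n - dperp + 1)) *
          ∑ ℓ : {j // j ∈ I₃} → (Fin μ → ZMod 2),
            ⨆ β : {b : Fin (n - k) → K // b ≠ 0},
              ∏ j : {j // j ∈ I₃},
                ‖ihat p K
                  (Finset.univ.filter fun x : K => τ j.val x = ℓ j)
                  (∑ i, β.val i * h j.val i)‖ :=
  stmt14_general p n k μ dperp K C CF hCF h hH hdperp I₁ I₂ I₃ h12 h13 h23 hcover hI₁ hI₂ τ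
end
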